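/- For every S ∈ V, all X, P ∈ E, and every s ∈ ℝ, one has Σ_{α=1}^{3} ⟨S J_α (cos s · X + sin s · P), −sin s · X + cos s · P⟩² = Σ_{α=1}^{3} ⟨S J_α X, P⟩². In particular, for X, P unit vectors with ⟨X,P⟩ = 0, the function s ↦ T_S(γ(s), γ(s), γ'(s), γ'(s)) along the great-circle geodesic γ(s) = cos s · X + sin s · P of the unit sphere S^{4n+3} ⊂ E is constant, so T_S defines an integral of the geodesic flow of the round sphere. -/

import Mathlib

open scoped Quaternion RealInnerProductSpace

noncomputable section

/-- `E n = ℍ^{n+1}` as a real inner product space. -/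
abbrev E (n : ℕ) := PiLp 2 (fun _ : Fin (n + 1) => ℍ)

/-- Componentwise right multiplication by the quaternion `q`, as a real-linear map. -/
def Rmul (n : ℕ) (q : ℍ) : E n →ₗ[ℝ] E n where
  toFun X := WithLp.toLp 2 (fun s => X s * q)
  map_add' X Y := by ext s : 1; simp [add_mul]
  map_smul' c X := by ext s : 1; simp [smul_mul_assoc]

/-- The three complex structures `J₁, J₂, J₃ = J₁ ∘ J₂`. -/
def Js (n : ℕ) : Fin 3 → (E n →ₗ[ℝ] E n) :=
  ![Rmul n ⟨0, 1, 0, 0⟩, Rmul n ⟨0, 0, 1, 0⟩, Rmul n ⟨0, 1, 0, 0⟩ ∘ₗ Rmul n ⟨0, 0, 1, 0⟩]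

/-- `S` belongs to `V`: it is self-adjoint and commutes with `J₁, J₂, J₃`. -/
def InV (n : ℕ) (S : E n →ₗ[ℝ] E n) : Prop :=
  (∀ X Y : E n, ⟪S X, Y⟫ = ⟪X, S Y⟫) ∧
    (∀ α : Fin 3, S ∘ₗ Js n α = Js n α ∘ₗ S)

/-- The quadrilinear form `T_S`. -/
def T (n : ℕ) (S : E n →ₗ[ℝ] E n) (X Y P Q : E n) : ℝ :=
  (1 / 2) * ∑ α : Fin 3,
    (⟪S (Js n α X), P⟫ * ⟪S (Js n α Y), Q⟫ +
      ⟪S (Js n α X), Q⟫ * ⟪S (Js n α Y), P⟫)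

lemma Rmul_skew (n : ℕ) (q : ℍ) (hq : q.re = 0) (x y : E n) :
    ⟪Rmul n q x, y⟫ = -⟪x, Rmul n q y⟫ := by
  have hstar : star q = -q := by ext <;> simp [hq]
  simp only [PiLp.inner_apply, Rmul, LinearMap.coe_mk, AddHom.coe_mk, ← Finset.sum_neg_distrib]
  refine Finset.sum_congr rfl fun i _ => ?_
  simp only [Quaternion.inner_def, star_mul, hstar, neg_mul, mul_neg, Quaternion.re_neg, neg_neg]
  rw [← mul_assoc]

lemma Rmul_comp (n : ℕ) (p q : ℍ) : Rmul n p ∘ₗ Rmul n q = Rmul n (q * p) := by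
  refine LinearMap.ext fun x => PiLp.ext fun i => ?_
  show x i * q * p = x i * (q * p)
  rw [mul_assoc]

lemma Js_skew (n : ℕ) (α : Fin 3) (x y : E n) : ⟪Js n α x, y⟫ = -⟪x, Js n α y⟫ := by
  fin_cases α
  · exact Rmul_skew n (⟨0, 1, 0, 0⟩ : ℍ) rfl x y
  · exact Rmul_skew n (⟨0, 0, 1, 0⟩ : ℍ) rfl x y
  · show ⟪(Rmul n (⟨0, 1, 0, 0⟩ : ℍ) ∘ₗ Rmul n (⟨0, 0, 1, 0⟩ : ℍ)) x, y⟫ =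
      -⟪x, (Rmul n (⟨0, 1, 0, 0⟩ : ℍ) ∘ₗ Rmul n (⟨0, 0, 1, 0⟩ : ℍ)) y⟫
    erw [Rmul_comp]
    exact Rmul_skew n _ (by erw [Quaternion.re_mul]; simp) x y

lemma key (n : ℕ) (S : E n →ₗ[ℝ] E n) (hS : InV n S) (X P : E n) (s : ℝ) (α : Fin 3) :
    ⟪S (Js n α (Real.cos s • X + Real.sin s • P)), -Real.sin s • X + Real.cos s • P⟫
      = ⟪S (Js n α X), P⟫ := by
  have hc : ∀ Z : E n, S (Js n α Z) = Js n α (S Z) := fun Z => by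
    have := hS.2 α
    exact LinearMap.congr_fun this Z
  have hzero : ∀ Z : E n, ⟪S (Js n α Z), Z⟫ = 0 := by
    intro Z
    have : ⟪S (Js n α Z), Z⟫ = -⟪S (Js n α Z), Z⟫ := by
      conv_lhs => rw [hc, Js_skew, hS.1, real_inner_comm]
    linarith
  have hanti : ⟪S (Js n α P), X⟫ = -⟪S (Js n α X), P⟫ := by
    rw [hc, Js_skew, hS.1, real_inner_comm]
  simp only [map_add, map_smul, inner_add_add_self, inner_add_left, inner_add_right,
    inner_smul_left, inner_smul_right, real_inner_smul_left, real_inner_smul_right,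
    starRingEnd_apply, star_trivial, hzero, hanti]
  have h1 : Real.cos s ^ 2 + Real.sin s ^ 2 = 1 := by
    rw [add_comm]; exact Real.sin_sq_add_cos_sq s
  generalize (⟪S (Js n α X), P⟫ : ℝ) = b
  linear_combination b * h1

/-- `T_S` is an integral of the geodesic flow of the round sphere:
for every `S ∈ V`, all `X, P ∈ E` and every `s ∈ ℝ`,
`Σ_α ⟨S J_α (cos s • X + sin s • P), −sin s • X + cos s • P⟩² = Σ_α ⟨S J_α X, P⟩²`.
In particular, along the great-circle geodesic `γ(s) = cos s • X + sin s • P`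
(for unit orthogonal `X, P`) the function `s ↦ T_S(γ(s), γ(s), γ'(s), γ'(s))` is constant. -/
theorem stmt3 (n : ℕ) (S : E n →ₗ[ℝ] E n) (hS : InV n S) (X P : E n) (s : ℝ) :
    (∑ α : Fin 3,
        ⟪S (Js n α (Real.cos s • X + Real.sin s • P)),
          -Real.sin s • X + Real.cos s • P⟫ ^ 2) =
      ∑ α : Fin 3, ⟪S (Js n α X), P⟫ ^ 2 ∧
    (‖X‖ = 1 → ‖P‖ = 1 → ⟪X, P⟫ = 0 →
      T n S (Real.cos s • X + Real.sin s • P) (Real.cos s • X + Real.sin s • P)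
          (-Real.sin s • X + Real.cos s • P) (-Real.sin s • X + Real.cos s • P) =
        T n S X X P P) := by
  constructor
  · exact Finset.sum_congr rfl fun α _ => by rw [key n S hS X P s α]
  · intro _ _ _
    unfold T
    congr 1
    exact Finset.sum_congr rfl fun α _ => by rw [key n S hS X P s α]
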